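/- Fix u ∈ ℝ, constants C₀ > 0, A₁ > 0, κ > 0, ṽ > 0 and an exponent p ≥ 1. Suppose that for every v' ≥ ṽ with 1 ≤ p ≤ A₁ (n v')^κ one has max_{1 ≤ j,k ≤ n} E|R_{jk}(u + i v')|^p ≤ C₀^p and E|u + i v' + m_n(u + i v')|^{−p} ≤ C₀^p. Then for every s₀ ≥ 1 and every v ≥ ṽ/s₀ with 1 ≤ p ≤ A₁ (n s₀ v)^κ one has max_{1 ≤ j,k ≤ n} E|R_{jk}(u + i v)|^p ≤ 2^p (1 + s₀)^p C₀^p and E|u + i v + m_n(u + i v)|^{−p} ≤ s₀^p C₀^p. -/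

import Mathlib

/-!
Compare the resolvent at `z = u + iv` with the resolvent at `z' = u + i s₀ v`, where the
hypothesis applies. Diagonalising `W`, the entries of `R` and the trace `n m_n` are spectral sums
`∑ wₐ (λₐ - z)⁻¹`, and for real `λ` the difference `|(λ - z)⁻¹ - (λ - z')⁻¹|` is bounded both
by `(s₀ - 1) Im (λ - z')⁻¹` and by `(s₀ - 1) Im (λ - z)⁻¹`. With
`|U_jα U_kα| ≤ (|U_jα|² + |U_kα|²) / 2` this gives, for every realisation,
`|R_jk(z)| ≤ |R_jk(z')| + (s₀ - 1)/2 (|R_jj(z')| + |R_kk(z')|)` and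
`|z' + m_n(z')| ≤ s₀ |z + m_n(z)|`. The first becomes a bound on `p`-th moments by the weighted
power mean inequality (the weights sum to `s₀`), the second because `t ↦ t⁻ᵖ` is decreasing.
-/

open MeasureTheory ProbabilityTheory

/-- The resolvent `R(z) = (B - z I)⁻¹` of a real matrix `B`, viewed over `ℂ`. -/
noncomputable def resolv {n : ℕ} (B : Matrix (Fin n) (Fin n) ℝ) (z : ℂ) :
    Matrix (Fin n) (Fin n) ℂ :=
  (B.map (fun x => (x : ℂ)) - z • (1 : Matrix (Fin n) (Fin n) ℂ))⁻¹

/-- The Stieltjes transform `m_n(z) = n⁻¹ Tr R(z)`. -/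
noncomputable def mSt {n : ℕ} (B : Matrix (Fin n) (Fin n) ℝ) (z : ℂ) : ℂ :=
  (n : ℂ)⁻¹ * (resolv B z).trace

open ComplexConjugate

namespace Complex

variable {a : ℝ} {z z' : ℂ}

lemma normSq_ofReal_sub (a : ℝ) (z : ℂ) :
    normSq ((a : ℂ) - z) = (a - z.re) ^ 2 + z.im ^ 2 := by
  simp [normSq_apply]
  ring

lemma ofReal_sub_ne_zero (hz : z.im ≠ 0) : (a : ℂ) - z ≠ 0 :=
  fun h ↦ hz (by simpa using congrArg im h)

lemma im_inv_ofReal_sub (a : ℝ) (z : ℂ) :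
    ((a : ℂ) - z)⁻¹.im = z.im / normSq ((a : ℂ) - z) := by
  simp [inv_im]

lemma im_inv_ofReal_sub_nonneg (hz : 0 ≤ z.im) : 0 ≤ ((a : ℂ) - z)⁻¹.im := by
  rw [im_inv_ofReal_sub]
  exact div_nonneg hz (normSq_nonneg _)

lemma im_le_norm_ofReal_sub (a : ℝ) (z : ℂ) : z.im ≤ ‖(a : ℂ) - z‖ :=
  (le_abs_self _).trans (by simpa using abs_im_le_norm ((a : ℂ) - z))

lemma norm_inv_ofReal_sub_le (hz : 0 < z.im) : ‖((a : ℂ) - z)⁻¹‖ ≤ z.im⁻¹ := by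
  rw [norm_inv]
  exact inv_anti₀ hz (im_le_norm_ofReal_sub a z)

lemma norm_mul_conj_le (a b : ℂ) : ‖a * conj b‖ ≤ (‖a‖ ^ 2 + ‖b‖ ^ 2) / 2 := by
  rw [norm_mul, norm_conj]
  nlinarith [two_mul_le_add_sq ‖a‖ ‖b‖]

lemma norm_sub_of_re_eq (hre : z.re = z'.re) (hzz' : z.im ≤ z'.im) : ‖z' - z‖ = z'.im - z.im := by
  rw [← dist_eq_norm, dist_of_re_eq hre.symm, Real.dist_eq, abs_of_nonneg (sub_nonneg.2 hzz')]

section SameRealPart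

variable (hre : z.re = z'.re) (hz : 0 < z.im) (hzz' : z.im ≤ z'.im)
include hre hz hzz'

lemma norm_ofReal_sub_le_norm_ofReal_sub : ‖(a : ℂ) - z‖ ≤ ‖(a : ℂ) - z'‖ := by
  rw [norm_def, norm_def, normSq_ofReal_sub, normSq_ofReal_sub, hre]
  gcongr

lemma norm_ofReal_sub_le_mul : ‖(a : ℂ) - z'‖ ≤ z'.im / z.im * ‖(a : ℂ) - z‖ := by
  have hs : 1 ≤ z'.im / z.im := (one_le_div hz).2 hzz'
  have hsq : (z'.im / z.im) ^ 2 * z.im ^ 2 = z'.im ^ 2 := by field_simp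
  rw [← pow_le_pow_iff_left₀ (norm_nonneg _) (by positivity) two_ne_zero, mul_pow,
    Complex.sq_norm, Complex.sq_norm, normSq_ofReal_sub, normSq_ofReal_sub, hre]
  nlinarith [sq_nonneg (a - z'.re), one_le_pow₀ (n := 2) hs]

lemma norm_inv_ofReal_sub_sub_inv :
    ‖((a : ℂ) - z)⁻¹ - ((a : ℂ) - z')⁻¹‖ =
      (z'.im - z.im) / (‖(a : ℂ) - z‖ * ‖(a : ℂ) - z'‖) := by
  rw [inv_sub_inv (ofReal_sub_ne_zero hz.ne') (ofReal_sub_ne_zero (hz.trans_le hzz').ne'),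
    sub_sub_sub_cancel_left, norm_div, norm_mul, ← norm_neg, neg_sub,
    norm_sub_of_re_eq hre hzz']

lemma norm_inv_ofReal_sub_sub_inv_le_im_left :
    ‖((a : ℂ) - z)⁻¹ - ((a : ℂ) - z')⁻¹‖ ≤ (z'.im / z.im - 1) * ((a : ℂ) - z)⁻¹.im := by
  have he : 0 < ‖(a : ℂ) - z‖ := hz.trans_le (im_le_norm_ofReal_sub a z)
  have hle := norm_ofReal_sub_le_norm_ofReal_sub (a := a) hre hz hzz'
  rw [norm_inv_ofReal_sub_sub_inv hre hz hzz', im_inv_ofReal_sub, ← Complex.sq_norm,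
    div_sub_one hz.ne', div_mul_div_comm, mul_comm z.im, ← div_mul_div_comm, div_self hz.ne',
    mul_one, sq]
  gcongr

lemma norm_inv_ofReal_sub_sub_inv_le_im_right :
    ‖((a : ℂ) - z)⁻¹ - ((a : ℂ) - z')⁻¹‖ ≤ (z'.im / z.im - 1) * ((a : ℂ) - z')⁻¹.im := by
  have he : 0 < ‖(a : ℂ) - z‖ := hz.trans_le (im_le_norm_ofReal_sub a z)
  have he' : 0 < ‖(a : ℂ) - z'‖ := he.trans_le (norm_ofReal_sub_le_norm_ofReal_sub hre hz hzz')
  have hle := norm_ofReal_sub_le_mul (a := a) hre hz hzz'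
  rw [div_mul_eq_mul_div, le_div_iff₀ hz] at hle
  rw [norm_inv_ofReal_sub_sub_inv hre hz hzz', im_inv_ofReal_sub, ← Complex.sq_norm,
    div_sub_one hz.ne', div_mul_div_comm, div_le_div_iff₀ (by positivity) (by positivity)]
  have hd : 0 ≤ z'.im - z.im := by linarith
  calc (z'.im - z.im) * (z.im * ‖(a : ℂ) - z'‖ ^ 2)
      = (z'.im - z.im) * ‖(a : ℂ) - z'‖ * (‖(a : ℂ) - z'‖ * z.im) := by ring
    _ ≤ (z'.im - z.im) * ‖(a : ℂ) - z'‖ * (z'.im * ‖(a : ℂ) - z‖) := by gcongr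
    _ = (z'.im - z.im) * z'.im * (‖(a : ℂ) - z‖ * ‖(a : ℂ) - z'‖) := by ring

end SameRealPart

end Complex

lemma Matrix.sum_norm_sq_apply_eq_one {ι : Type*} [Fintype ι] [DecidableEq ι]
    (U : unitary (Matrix ι ι ℂ)) (j : ι) : ∑ α, ‖(U : Matrix ι ι ℂ) j α‖ ^ 2 = 1 := by
  have h := congrFun (congrFun (Unitary.coe_mul_star_self U) j) j
  rw [Matrix.mul_apply, Matrix.one_apply_eq] at h
  exact_mod_cast (by simpa [Complex.mul_conj'] using h :
    ∑ α, (‖(U : Matrix ι ι ℂ) j α‖ : ℂ) ^ 2 = 1)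

namespace Matrix.IsHermitian

variable {ι : Type*} [Fintype ι] [DecidableEq ι] {A : Matrix ι ι ℂ} (hA : A.IsHermitian)
  {z z' : ℂ}

include hA

lemma sub_smul_one_eq_conj (z : ℂ) :
    A - z • 1 = Unitary.conjStarAlgAut ℂ _ hA.eigenvectorUnitary
      (diagonal fun α ↦ (hA.eigenvalues α : ℂ) - z) := by
  conv_lhs => rw [hA.spectral_theorem,
    ← map_one (Unitary.conjStarAlgAut ℂ _ hA.eigenvectorUnitary), ← map_smul, ← map_sub,
    smul_one_eq_diagonal, diagonal_sub]
  rfl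

lemma inv_sub_smul_one_eq_conj (hz : z.im ≠ 0) :
    (A - z • 1)⁻¹ = Unitary.conjStarAlgAut ℂ _ hA.eigenvectorUnitary
      (diagonal fun α ↦ ((hA.eigenvalues α : ℂ) - z)⁻¹) := by
  apply inv_eq_right_inv
  rw [hA.sub_smul_one_eq_conj, ← map_mul, diagonal_mul_diagonal]
  simp [Complex.ofReal_sub_ne_zero hz]

lemma inv_sub_smul_one_apply (hz : z.im ≠ 0) (j k : ι) :
    (A - z • 1)⁻¹ j k = ∑ α, (hA.eigenvectorUnitary : Matrix ι ι ℂ) j α *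
      conj ((hA.eigenvectorUnitary : Matrix ι ι ℂ) k α) * ((hA.eigenvalues α : ℂ) - z)⁻¹ := by
  rw [hA.inv_sub_smul_one_eq_conj hz, Unitary.conjStarAlgAut_apply, mul_apply]
  simp [mul_diagonal, mul_right_comm]

lemma trace_inv_sub_smul_one (hz : z.im ≠ 0) :
    trace (A - z • 1)⁻¹ = ∑ α, ((hA.eigenvalues α : ℂ) - z)⁻¹ := by
  rw [hA.inv_sub_smul_one_eq_conj hz, Unitary.conjStarAlgAut_apply, trace_mul_cycle,
    Unitary.coe_star_mul_self, one_mul, trace_diagonal]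

lemma im_inv_sub_smul_one_apply_self (hz : z.im ≠ 0) (j : ι) :
    ((A - z • 1)⁻¹ j j).im = ∑ α, ‖(hA.eigenvectorUnitary : Matrix ι ι ℂ) j α‖ ^ 2 *
      ((hA.eigenvalues α : ℂ) - z)⁻¹.im := by
  simp_rw [hA.inv_sub_smul_one_apply hz, Complex.im_sum, Complex.mul_conj',
    ← Complex.ofReal_pow, Complex.im_ofReal_mul]

lemma norm_inv_sub_smul_one_apply_le (hz : 0 < z.im) (j k : ι) :
    ‖(A - z • 1)⁻¹ j k‖ ≤ z.im⁻¹ := by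
  rw [hA.inv_sub_smul_one_apply hz.ne']
  refine (norm_sum_le _ _).trans ?_
  calc ∑ α, ‖(hA.eigenvectorUnitary : Matrix ι ι ℂ) j α *
          conj ((hA.eigenvectorUnitary : Matrix ι ι ℂ) k α) * ((hA.eigenvalues α : ℂ) - z)⁻¹‖
      ≤ ∑ α, (‖(hA.eigenvectorUnitary : Matrix ι ι ℂ) j α‖ ^ 2 +
          ‖(hA.eigenvectorUnitary : Matrix ι ι ℂ) k α‖ ^ 2) / 2 * z.im⁻¹ := by
        gcongr with α
        rw [norm_mul]
        gcongr
        · exact Complex.norm_mul_conj_le _ _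
        · exact Complex.norm_inv_ofReal_sub_le hz
    _ = z.im⁻¹ := by
        rw [← Finset.sum_mul, ← Finset.sum_div, Finset.sum_add_distrib,
          sum_norm_sq_apply_eq_one, sum_norm_sq_apply_eq_one]
        ring

lemma norm_inv_sub_smul_one_apply_sub_le (hre : z.re = z'.re) (hz : 0 < z.im)
    (hzz' : z.im ≤ z'.im) (j k : ι) :
    ‖(A - z • 1)⁻¹ j k - (A - z' • 1)⁻¹ j k‖ ≤
      (z'.im / z.im - 1) / 2 * (((A - z' • 1)⁻¹ j j).im + ((A - z' • 1)⁻¹ k k).im) := by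
  have hz' : z'.im ≠ 0 := (hz.trans_le hzz').ne'
  rw [hA.inv_sub_smul_one_apply hz.ne', hA.inv_sub_smul_one_apply hz',
    hA.im_inv_sub_smul_one_apply_self hz', hA.im_inv_sub_smul_one_apply_self hz',
    ← Finset.sum_sub_distrib, ← Finset.sum_add_distrib, Finset.mul_sum]
  refine (norm_sum_le _ _).trans (Finset.sum_le_sum fun α _ ↦ ?_)
  rw [← mul_sub, norm_mul]
  calc _ ≤ (‖(hA.eigenvectorUnitary : Matrix ι ι ℂ) j α‖ ^ 2 +
          ‖(hA.eigenvectorUnitary : Matrix ι ι ℂ) k α‖ ^ 2) / 2 *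
          ((z'.im / z.im - 1) * ((hA.eigenvalues α : ℂ) - z')⁻¹.im) := by
        gcongr
        · exact Complex.norm_mul_conj_le _ _
        · exact Complex.norm_inv_ofReal_sub_sub_inv_le_im_right hre hz hzz'
    _ = _ := by ring

lemma im_trace_inv_sub_smul_one_nonneg (hz : 0 < z.im) : 0 ≤ (trace (A - z • 1)⁻¹).im := by
  rw [hA.trace_inv_sub_smul_one hz.ne', Complex.im_sum]
  exact Finset.sum_nonneg fun α _ ↦ Complex.im_inv_ofReal_sub_nonneg hz.le

lemma norm_trace_inv_sub_smul_one_sub_le (hre : z.re = z'.re) (hz : 0 < z.im)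
    (hzz' : z.im ≤ z'.im) :
    ‖trace (A - z • 1)⁻¹ - trace (A - z' • 1)⁻¹‖ ≤
      (z'.im / z.im - 1) * (trace (A - z • 1)⁻¹).im := by
  rw [hA.trace_inv_sub_smul_one hz.ne', hA.trace_inv_sub_smul_one (hz.trans_le hzz').ne',
    ← Finset.sum_sub_distrib, Complex.im_sum, Finset.mul_sum]
  exact (norm_sum_le _ _).trans (Finset.sum_le_sum fun α _ ↦
    Complex.norm_inv_ofReal_sub_sub_inv_le_im_left hre hz hzz')

end Matrix.IsHermitian

lemma Matrix.IsSymm.isHermitian_map_ofReal {ι : Type*} {B : Matrix ι ι ℝ} (hB : B.IsSymm) :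
    (B.map fun x ↦ (x : ℂ)).IsHermitian :=
  (Matrix.isHermitian_iff_isSymm.2 hB).map _ fun x ↦ (Complex.conj_ofReal x).symm

section Resolvent

variable {n : ℕ} {B : Matrix (Fin n) (Fin n) ℝ} {z z' : ℂ}

lemma norm_resolv_apply_le (hB : B.IsSymm) (hz : 0 < z.im) (j k : Fin n) :
    ‖resolv B z j k‖ ≤ z.im⁻¹ :=
  hB.isHermitian_map_ofReal.norm_inv_sub_smul_one_apply_le hz j k

lemma norm_resolv_apply_le_add (hB : B.IsSymm) (hre : z.re = z'.re) (hz : 0 < z.im)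
    (hzz' : z.im ≤ z'.im) (j k : Fin n) :
    ‖resolv B z j k‖ ≤ ‖resolv B z' j k‖ +
      (z'.im / z.im - 1) / 2 * (‖resolv B z' j j‖ + ‖resolv B z' k k‖) := by
  have hs : 0 ≤ z'.im / z.im - 1 := sub_nonneg.2 ((one_le_div hz).2 hzz')
  have hdiff := hB.isHermitian_map_ofReal.norm_inv_sub_smul_one_apply_sub_le hre hz hzz' j k
  calc ‖resolv B z j k‖ ≤ ‖resolv B z' j k‖ + ‖resolv B z j k - resolv B z' j k‖ :=
        norm_le_norm_add_norm_sub' _ _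
    _ ≤ _ := by
        gcongr
        refine hdiff.trans ?_
        gcongr <;> exact Complex.im_le_norm _

lemma im_mSt (B : Matrix (Fin n) (Fin n) ℝ) (z : ℂ) :
    (mSt B z).im = (n : ℝ)⁻¹ * (resolv B z).trace.im := by
  rw [mSt, ← Complex.ofReal_natCast, ← Complex.ofReal_inv, Complex.im_ofReal_mul]

lemma im_le_norm_add_mSt (hB : B.IsSymm) (hz : 0 < z.im) : z.im ≤ ‖z + mSt B z‖ := by
  refine le_trans ?_ (Complex.im_le_norm _)
  rw [Complex.add_im, im_mSt, le_add_iff_nonneg_right]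
  exact mul_nonneg (by positivity) (hB.isHermitian_map_ofReal.im_trace_inv_sub_smul_one_nonneg hz)

lemma norm_add_mSt_sub_le (hB : B.IsSymm) (hre : z.re = z'.re) (hz : 0 < z.im)
    (hzz' : z.im ≤ z'.im) :
    ‖(z' + mSt B z') - (z + mSt B z)‖ ≤ (z'.im / z.im - 1) * (z + mSt B z).im := by
  have hshift : ‖z' - z‖ = (z'.im / z.im - 1) * z.im := by
    rw [Complex.norm_sub_of_re_eq hre hzz']
    field_simp
  have htrace : ‖mSt B z' - mSt B z‖ ≤ (z'.im / z.im - 1) * (mSt B z).im := by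
    rw [im_mSt, mSt, mSt, ← mul_sub, norm_mul, norm_inv, Complex.norm_natCast, norm_sub_rev,
      mul_left_comm]
    gcongr
    exact hB.isHermitian_map_ofReal.norm_trace_inv_sub_smul_one_sub_le hre hz hzz'
  rw [add_sub_add_comm, Complex.add_im, mul_add, ← hshift]
  exact (norm_add_le _ _).trans (add_le_add_right htrace _)

lemma norm_add_mSt_le_mul (hB : B.IsSymm) (hre : z.re = z'.re) (hz : 0 < z.im)
    (hzz' : z.im ≤ z'.im) : ‖z' + mSt B z'‖ ≤ z'.im / z.im * ‖z + mSt B z‖ :=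
  calc ‖z' + mSt B z'‖ ≤ ‖z + mSt B z‖ + ‖(z' + mSt B z') - (z + mSt B z)‖ :=
        norm_le_norm_add_norm_sub' _ _
    _ ≤ ‖z + mSt B z‖ + (z'.im / z.im - 1) * ‖z + mSt B z‖ := by
        refine add_le_add_right ((norm_add_mSt_sub_le hB hre hz hzz').trans ?_) _
        exact mul_le_mul_of_nonneg_left (Complex.im_le_norm _)
          (sub_nonneg.2 ((one_le_div hz).2 hzz'))
    _ = z'.im / z.im * ‖z + mSt B z‖ := by ring

end Resolvent

lemma Real.rpow_sum_mul_le {ι : Type*} (s : Finset ι) {p : ℝ} (hp : 1 ≤ p) {c y : ι → ℝ}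
    (hc : ∀ i, 0 ≤ c i) (hy : ∀ i, 0 ≤ y i) :
    (∑ i ∈ s, c i * y i) ^ p ≤ (∑ i ∈ s, c i) ^ (p - 1) * ∑ i ∈ s, c i * y i ^ p := by
  have hp0 : p ≠ 0 := (zero_lt_one.trans_le hp).ne'
  have hc_sum : 0 ≤ ∑ i ∈ s, c i := Finset.sum_nonneg fun i _ ↦ hc i
  have hcy_sum : 0 ≤ ∑ i ∈ s, c i * y i ^ p :=
    Finset.sum_nonneg fun i _ ↦ mul_nonneg (hc i) (Real.rpow_nonneg (hy i) p)
  calc (∑ i ∈ s, c i * y i) ^ p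
      ≤ ((∑ i ∈ s, c i) ^ (1 - p⁻¹) * (∑ i ∈ s, c i * y i ^ p) ^ p⁻¹) ^ p := by
        gcongr
        · exact Finset.sum_nonneg fun i _ ↦ mul_nonneg (hc i) (hy i)
        · exact Real.inner_le_weight_mul_Lp_of_nonneg s hp c y hc hy
    _ = (∑ i ∈ s, c i) ^ (p - 1) * ∑ i ∈ s, c i * y i ^ p := by
        rw [Real.mul_rpow (by positivity) (by positivity), ← Real.rpow_mul hc_sum,
          Real.rpow_inv_rpow hcy_sum hp0, sub_mul, inv_mul_cancel₀ hp0, one_mul]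

section Moments

variable {Ω : Type*} [MeasurableSpace Ω] {P : Measure Ω}

lemma integral_rpow_le_of_le_sum {ι : Type*} [Fintype ι] {p C : ℝ} (hp : 1 ≤ p) {c : ι → ℝ}
    {Y : ι → Ω → ℝ} {X : Ω → ℝ} (hc : ∀ i, 0 ≤ c i) (hY : ∀ i ω, 0 ≤ Y i ω)
    (hX : ∀ ω, 0 ≤ X ω) (hXY : ∀ ω, X ω ≤ ∑ i, c i * Y i ω)
    (hint : ∀ i, Integrable (fun ω ↦ Y i ω ^ p) P) (hmom : ∀ i, ∫ ω, Y i ω ^ p ∂P ≤ C ^ p) :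
    ∫ ω, X ω ^ p ∂P ≤ (∑ i, c i) ^ p * C ^ p := by
  have hp0 : 0 ≤ p := zero_le_one.trans hp
  calc ∫ ω, X ω ^ p ∂P ≤ ∫ ω, (∑ i, c i) ^ (p - 1) * ∑ i, c i * Y i ω ^ p ∂P := by
        refine integral_mono_of_nonneg (ae_of_all _ fun ω ↦ Real.rpow_nonneg (hX ω) p)
          ((integrable_finsetSum _ fun i _ ↦ (hint i).const_mul (c i)).const_mul _)
          (ae_of_all _ fun ω ↦ ?_)
        exact (Real.rpow_le_rpow (hX ω) (hXY ω) hp0).trans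
          (Real.rpow_sum_mul_le _ hp hc fun i ↦ hY i ω)
    _ = (∑ i, c i) ^ (p - 1) * ∑ i, c i * ∫ ω, Y i ω ^ p ∂P := by
        rw [integral_const_mul, integral_finsetSum _ fun i _ ↦ (hint i).const_mul (c i)]
        simp_rw [integral_const_mul]
    _ ≤ (∑ i, c i) ^ (p - 1) * ∑ i, c i * C ^ p := by
        gcongr with i
        · exact Real.rpow_nonneg (Finset.sum_nonneg fun i _ ↦ hc i) _
        · exact hc i
        · exact hmom i
    _ = (∑ i, c i) ^ p * C ^ p := by
        rw [← Finset.sum_mul, ← mul_assoc, ← Real.rpow_add_one' (Finset.sum_nonneg fun i _ ↦ hc i)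
          (by linarith), sub_add_cancel]

lemma integral_rpow_neg_le_of_le_mul {Y Y' : Ω → ℝ} {s p : ℝ} (hs : 0 < s) (hp : 0 ≤ p)
    (hY' : ∀ ω, 0 < Y' ω) (hle : ∀ ω, Y' ω ≤ s * Y ω)
    (hint : Integrable (fun ω ↦ Y' ω ^ (-p)) P) :
    ∫ ω, Y ω ^ (-p) ∂P ≤ s ^ p * ∫ ω, Y' ω ^ (-p) ∂P := by
  have hY : ∀ ω, 0 ≤ Y ω := fun ω ↦
    nonneg_of_mul_nonneg_right ((hY' ω).le.trans (hle ω)) hs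
  rw [← integral_const_mul]
  refine integral_mono_of_nonneg (ae_of_all _ fun ω ↦ Real.rpow_nonneg (hY ω) _)
    (hint.const_mul _) (ae_of_all _ fun ω ↦ ?_)
  calc Y ω ^ (-p) = s ^ p * (s * Y ω) ^ (-p) := by
        rw [Real.mul_rpow hs.le (hY ω), ← mul_assoc, ← Real.rpow_add hs, add_neg_cancel,
          Real.rpow_zero, one_mul]
    _ ≤ s ^ p * Y' ω ^ (-p) := mul_le_mul_of_nonneg_left
        (Real.rpow_le_rpow_of_nonpos (hY' ω) (hle ω) (neg_nonpos.2 hp)) (by positivity)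

end Moments

section RandomMatrix

variable {Ω : Type*} [MeasurableSpace Ω] {n : ℕ} {W : Ω → Matrix (Fin n) (Fin n) ℝ}

lemma measurable_resolv_apply (hW : ∀ i j, Measurable fun ω ↦ W ω i j) (z : ℂ) (j k : Fin n) :
    Measurable fun ω ↦ resolv (W ω) z j k := by
  let M : (Fin n → Fin n → ℝ) → Matrix (Fin n) (Fin n) ℂ :=
    fun B ↦ (Matrix.of B).map (fun x ↦ (x : ℂ)) - z • 1
  have hM : Continuous M :=
    ((continuous_id.matrix_map Complex.continuous_ofReal)).sub continuous_const
  have hW' : Measurable fun ω ↦ fun i j ↦ W ω i j :=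
    measurable_pi_lambda _ fun i ↦ measurable_pi_lambda _ (hW i)
  simp_rw [resolv, Matrix.inv_def, Matrix.smul_apply, smul_eq_mul, Ring.inverse_eq_inv]
  exact (measurable_inv.comp (hM.matrix_det.measurable.comp hW')).mul
    ((hM.matrix_adjugate.matrix_elem j k).measurable.comp hW')

lemma measurable_mSt (hW : ∀ i j, Measurable fun ω ↦ W ω i j) (z : ℂ) :
    Measurable fun ω ↦ mSt (W ω) z :=
  measurable_const.mul (Finset.measurable_sum _ fun i _ ↦ measurable_resolv_apply hW z i i)

variable {P : Measure Ω} [IsFiniteMeasure P] {z z' : ℂ} {p : ℝ}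

lemma integrable_norm_resolv_apply_rpow (hW : ∀ i j, Measurable fun ω ↦ W ω i j)
    (hsymm : ∀ ω, (W ω).IsSymm) (hz : 0 < z.im) (hp : 0 ≤ p) (j k : Fin n) :
    Integrable (fun ω ↦ ‖resolv (W ω) z j k‖ ^ p) P := by
  refine .of_bound ((measurable_resolv_apply hW z j k).norm.pow_const p).aestronglyMeasurable
    (z.im⁻¹ ^ p) (ae_of_all _ fun ω ↦ ?_)
  rw [Real.norm_of_nonneg (by positivity)]
  exact Real.rpow_le_rpow (norm_nonneg _) (norm_resolv_apply_le (hsymm ω) hz j k) hp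

lemma integrable_norm_add_mSt_rpow_neg (hW : ∀ i j, Measurable fun ω ↦ W ω i j)
    (hsymm : ∀ ω, (W ω).IsSymm) (hz : 0 < z.im) (hp : 0 ≤ p) :
    Integrable (fun ω ↦ ‖z + mSt (W ω) z‖ ^ (-p)) P := by
  refine .of_bound (((measurable_mSt hW z).const_add z).norm.pow_const _).aestronglyMeasurable
    (z.im ^ (-p)) (ae_of_all _ fun ω ↦ ?_)
  rw [Real.norm_of_nonneg (by positivity)]
  exact Real.rpow_le_rpow_of_nonpos hz (im_le_norm_add_mSt (hsymm ω) hz) (neg_nonpos.2 hp)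

section Descent

variable (hW : ∀ i j, Measurable fun ω ↦ W ω i j) (hsymm : ∀ ω, (W ω).IsSymm) (hre : z.re = z'.re)
  (hz : 0 < z.im) (hzz' : z.im ≤ z'.im)
include hW hsymm hre hz hzz'

lemma integral_norm_resolv_apply_rpow_le {C : ℝ} (hp : 1 ≤ p)
    (hmom : ∀ a b, ∫ ω, ‖resolv (W ω) z' a b‖ ^ p ∂P ≤ C ^ p) (j k : Fin n) :
    ∫ ω, ‖resolv (W ω) z j k‖ ^ p ∂P ≤ (z'.im / z.im) ^ p * C ^ p := by
  let entry : Fin 3 → Fin n × Fin n := ![(j, k), (j, j), (k, k)]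
  let weight : Fin 3 → ℝ := ![1, (z'.im / z.im - 1) / 2, (z'.im / z.im - 1) / 2]
  have hweight : ∑ i, weight i = z'.im / z.im := by
    simp [weight, Fin.sum_univ_three]
    ring
  have hs : 0 ≤ z'.im / z.im - 1 := sub_nonneg.2 ((one_le_div hz).2 hzz')
  rw [← hweight]
  refine integral_rpow_le_of_le_sum hp
    (Y := fun i ω ↦ ‖resolv (W ω) z' (entry i).1 (entry i).2‖) (fun i ↦ ?_)
    (fun _ _ ↦ norm_nonneg _) (fun _ ↦ norm_nonneg _) (fun ω ↦ ?_)
    (fun i ↦ integrable_norm_resolv_apply_rpow hW hsymm (hz.trans_le hzz') (by linarith) _ _)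
    (fun i ↦ hmom _ _)
  · fin_cases i <;> simp [weight] <;> linarith
  · simpa [Fin.sum_univ_three, entry, weight, mul_add, add_assoc] using
      norm_resolv_apply_le_add (hsymm ω) hre hz hzz' j k

lemma integral_norm_add_mSt_rpow_neg_le (hp : 0 ≤ p) :
    ∫ ω, ‖z + mSt (W ω) z‖ ^ (-p) ∂P ≤
      (z'.im / z.im) ^ p * ∫ ω, ‖z' + mSt (W ω) z'‖ ^ (-p) ∂P :=
  integral_rpow_neg_le_of_le_mul (div_pos (hz.trans_le hzz') hz) hp
    (fun ω ↦ (hz.trans_le hzz').trans_le (im_le_norm_add_mSt (hsymm ω) (hz.trans_le hzz')))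
    (fun ω ↦ norm_add_mSt_le_mul (hsymm ω) hre hz hzz')
    (integrable_norm_add_mSt_rpow_neg hW hsymm (hz.trans_le hzz') hp)

end Descent

end RandomMatrix

theorem descent_lemma_general
    {Ω : Type} [MeasurableSpace Ω] (P : Measure Ω) [IsProbabilityMeasure P]
    (n : ℕ) (W : Ω → Matrix (Fin n) (Fin n) ℝ)
    (_hmeas : ∀ i j, Measurable fun ω => W ω i j)
    (_hsymm : ∀ ω, (W ω).IsSymm)
    (u C₀ A₁ κ vt p : ℝ) (hC₀ : 0 < C₀) (hvt : 0 < vt)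
    (hp : 1 ≤ p)
    (hyp : ∀ v' : ℝ, vt ≤ v' → p ≤ A₁ * (n * v') ^ κ →
      (∀ j k : Fin n,
        (∫ ω, Norm.norm (resolv (W ω) (u + v' * Complex.I) j k) ^ p ∂P) ≤ C₀ ^ p) ∧
      (∫ ω, Norm.norm
          ((u + v' * Complex.I) + mSt (W ω) (u + v' * Complex.I)) ^ (-p) ∂P) ≤ C₀ ^ p) :
    ∀ s₀ v : ℝ, 1 ≤ s₀ → vt / s₀ ≤ v → p ≤ A₁ * (n * (s₀ * v)) ^ κ →
      (∀ j k : Fin n,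
        (∫ ω, Norm.norm (resolv (W ω) (u + v * Complex.I) j k) ^ p ∂P)
          ≤ 2 ^ p * (1 + s₀) ^ p * C₀ ^ p) ∧
      (∫ ω, Norm.norm
          ((u + v * Complex.I) + mSt (W ω) (u + v * Complex.I)) ^ (-p) ∂P)
        ≤ s₀ ^ p * C₀ ^ p := by
  intro s₀ v hs₀ hv hple
  have hs₀_pos : 0 < s₀ := one_pos.trans_le hs₀
  have hv_pos : 0 < v := (div_pos hvt hs₀_pos).trans_le hv
  obtain ⟨hR, hm⟩ := hyp (s₀ * v) (by rwa [div_le_iff₀ hs₀_pos, mul_comm] at hv) hple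
  set z : ℂ := u + v * Complex.I
  set z' : ℂ := u + (s₀ * v : ℝ) * Complex.I
  have hre : z.re = z'.re := by simp [z, z']
  have hz : 0 < z.im := by simpa [z] using hv_pos
  have hzz' : z.im ≤ z'.im := by simpa [z, z'] using le_mul_of_one_le_left hv_pos.le hs₀
  have hratio : z'.im / z.im = s₀ := by simp [z, z', hv_pos.ne']
  refine ⟨fun j k ↦ ?_, ?_⟩
  · calc ∫ ω, ‖resolv (W ω) z j k‖ ^ p ∂P ≤ s₀ ^ p * C₀ ^ p := by
          rw [← hratio]
          exact integral_norm_resolv_apply_rpow_le _hmeas _hsymm hre hz hzz' hp hR j k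
      _ ≤ (2 * (1 + s₀)) ^ p * C₀ ^ p := by gcongr; linarith
      _ = 2 ^ p * (1 + s₀) ^ p * C₀ ^ p := by rw [Real.mul_rpow two_pos.le (by positivity)]
  · calc ∫ ω, ‖z + mSt (W ω) z‖ ^ (-p) ∂P
        ≤ s₀ ^ p * ∫ ω, ‖z' + mSt (W ω) z'‖ ^ (-p) ∂P := by
          rw [← hratio]
          exact integral_norm_add_mSt_rpow_neg_le _hmeas _hsymm hre hz hzz' (by linarith)
      _ ≤ s₀ ^ p * C₀ ^ p := by gcongr

/-- Lemma 3.3 (descent lemma): moment bounds on resolvent entries at scale `vt`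
propagate down to scale `vt/s₀` at the cost of factors of `s₀`. -/
theorem descent_lemma
    {Ω : Type} [MeasurableSpace Ω] (P : Measure Ω) [IsProbabilityMeasure P]
    (n : ℕ) (W : Ω → Matrix (Fin n) (Fin n) ℝ)
    (_hmeas : ∀ i j, Measurable fun ω => W ω i j)
    (_hsymm : ∀ ω, (W ω).IsSymm)
    (u C₀ A₁ κ vt p : ℝ) (hC₀ : 0 < C₀) (hA₁ : 0 < A₁) (hκ : 0 < κ) (hvt : 0 < vt)
    (hp : 1 ≤ p)
    (hyp : ∀ v' : ℝ, vt ≤ v' → p ≤ A₁ * (n * v') ^ κ →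
      (∀ j k : Fin n,
        (∫ ω, Norm.norm (resolv (W ω) (u + v' * Complex.I) j k) ^ p ∂P) ≤ C₀ ^ p) ∧
      (∫ ω, Norm.norm
          ((u + v' * Complex.I) + mSt (W ω) (u + v' * Complex.I)) ^ (-p) ∂P) ≤ C₀ ^ p) :
    ∀ s₀ v : ℝ, 1 ≤ s₀ → vt / s₀ ≤ v → p ≤ A₁ * (n * (s₀ * v)) ^ κ →
      (∀ j k : Fin n,
        (∫ ω, Norm.norm (resolv (W ω) (u + v * Complex.I) j k) ^ p ∂P)
          ≤ 2 ^ p * (1 + s₀) ^ p * C₀ ^ p) ∧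
      (∫ ω, Norm.norm
          ((u + v * Complex.I) + mSt (W ω) (u + v * Complex.I)) ^ (-p) ∂P)
        ≤ s₀ ^ p * C₀ ^ p :=
  descent_lemma_general P n W _hmeas _hsymm u C₀ A₁ κ vt p hC₀ hvt hp hyp
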